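/- Let 0 < p ≤ 1 and let Ω = (Ω_n)_{n≥0} be a sequence of positive numbers with W_n = Σ_{k=0}^n Ω_k. For any sequence f ∈ d(Ω,p)', the associate norm satisfies ‖f‖_{d(Ω,p)'} = sup_{n≥0} W_n^{-1/p} Σ_{k=0}^n f*(k), where f* is the nonincreasing rearrangement of the sequence (|f(n)|)_n. -/

import Mathlib

open MeasureTheory Set
open scoped ENNReal NNReal

/-- Nonincreasing rearrangement of a sequence (w.r.t. counting measure on ℕ). -/
noncomputable def rearrSeq (f : ℕ → ℝ) (n : ℕ) : ℝ≥0∞ :=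
  sInf {s : ℝ≥0∞ | Measure.count {k : ℕ | s < ENNReal.ofReal |f k|} ≤ (n : ℝ≥0∞)}

/-- The Lorentz sequence space quasi-norm `‖f‖_{d(Ω,p)} = (Σ f*(n)^p Ωₙ)^{1/p}`. -/
noncomputable def dNorm (Ω : ℕ → ℝ) (p : ℝ) (f : ℕ → ℝ) : ℝ≥0∞ :=
  (∑' n, (rearrSeq f n) ^ p * ENNReal.ofReal (Ω n)) ^ (1 / p)

noncomputable def mcount (F : ℕ → ℝ≥0∞) (s : ℝ≥0∞) : ℝ≥0∞ :=
  Measure.count {k : ℕ | s < F k}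

noncomputable def rearrE (F : ℕ → ℝ≥0∞) (n : ℕ) : ℝ≥0∞ :=
  sInf {s : ℝ≥0∞ | mcount F s ≤ (n : ℝ≥0∞)}

lemma rearrSeq_eq_rearrE (f : ℕ → ℝ) : rearrSeq f = rearrE (fun k => ENNReal.ofReal |f k|) := rfl

lemma mcount_antitone (F : ℕ → ℝ≥0∞) : Antitone (mcount F) := by
  intro s t hst
  exact measure_mono (fun k hk => lt_of_le_of_lt hst hk)

lemma rearrE_antitone (F : ℕ → ℝ≥0∞) : Antitone (rearrE F) := by
  intro m n hmn
  exact sInf_le_sInf (fun s hs => le_trans hs ((Nat.cast_le (α := ℝ≥0∞)).2 hmn))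

lemma mcount_le_iff (F : ℕ → ℝ≥0∞) (s : ℝ≥0∞) (n : ℕ) :
    mcount F s ≤ (n : ℝ≥0∞) ↔ rearrE F n ≤ s := by
  constructor
  · intro h; exact sInf_le h
  · intro h
    rcases eq_or_ne s ⊤ with rfl | hs
    · have : {k : ℕ | (⊤:ℝ≥0∞) < F k} = ∅ := by
        ext k; simp [not_top_lt]
      simp [mcount, this]
    · have hU : {k : ℕ | s < F k} = ⋃ j : ℕ, {k : ℕ | s + (↑(j+1))⁻¹ < F k} := by
        ext k
        simp only [mem_setOf_eq, mem_iUnion]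
        constructor
        · intro hk
          have hpos : (0:ℝ≥0∞) < F k - s := tsub_pos_of_lt hk
          obtain ⟨j, hj⟩ := ENNReal.exists_inv_nat_lt hpos.ne'
          refine ⟨j, ?_⟩
          calc s + (↑(j+1))⁻¹ ≤ s + (↑j)⁻¹ := by
                gcongr
                exact_mod_cast Nat.le_succ j
            _ < s + (F k - s) := ENNReal.add_lt_add_left hs hj
            _ = F k := add_tsub_cancel_of_le hk.le
        · rintro ⟨j, hj⟩
          exact lt_of_le_of_lt le_self_add hj
      have hmono : Monotone (fun j : ℕ => {k : ℕ | s + (↑(j+1))⁻¹ < F k}) := by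
        intro i j hij k hk
        simp only [mem_setOf_eq] at hk ⊢
        refine lt_of_le_of_lt ?_ hk
        have : ((i+1:ℕ):ℝ≥0∞) ≤ ((j+1:ℕ):ℝ≥0∞) := by exact_mod_cast Nat.succ_le_succ hij
        gcongr
      have hcont : mcount F s = ⨆ j : ℕ, mcount F (s + (↑(j+1))⁻¹) := by
        rw [mcount, hU]
        exact Directed.measure_iUnion (directed_of_isDirected_le hmono)
      rw [hcont]
      refine iSup_le fun j => ?_
      have hlt : rearrE F n < s + (↑(j+1))⁻¹ := by
        refine lt_of_le_of_lt h ?_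
        refine ENNReal.lt_add_right hs ?_
        simp
      obtain ⟨u, hu, hults⟩ := sInf_lt_iff.mp hlt
      exact le_trans (mcount_antitone F hults.le) hu

lemma lt_rearrE_iff (F : ℕ → ℝ≥0∞) (s : ℝ≥0∞) (n : ℕ) :
    s < rearrE F n ↔ (n : ℝ≥0∞) < mcount F s := by
  rw [← not_le, ← not_le, mcount_le_iff]

lemma count_top_or_nat (S : Set ℕ) : Measure.count S = ⊤ ∨ ∃ m : ℕ, Measure.count S = m := by
  rcases S.finite_or_infinite with hS | hS
  · exact Or.inr ⟨hS.toFinset.card, by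
      rw [Measure.count_apply_finite S hS]⟩
  · exact Or.inl (Measure.count_apply_infinite hS)

lemma count_lt_cast {c : ℝ≥0∞} (hc : c = ⊤ ∨ ∃ m : ℕ, c = m) :
    Measure.count {n : ℕ | (n : ℝ≥0∞) < c} = c := by
  rcases hc with rfl | ⟨m, rfl⟩
  · have : {n : ℕ | (n : ℝ≥0∞) < ⊤} = univ := by
      ext n; simp [ENNReal.natCast_lt_top]
    rw [this, Measure.count_apply_infinite infinite_univ]
  · have : {n : ℕ | (n : ℝ≥0∞) < m} = ↑(Finset.range m) := by
      ext n; simp [Nat.cast_lt]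
    rw [this, Measure.count_apply_finset]
    simp

lemma measurableSet_ofReal_lt (a : ℝ≥0∞) : MeasurableSet {x : ℝ | ENNReal.ofReal x < a} :=
  ENNReal.measurable_ofReal (measurableSet_Iio (a := a))

lemma vol_lt (a : ℝ≥0∞) :
    ∫⁻ s in Ioi (0:ℝ), ({x : ℝ | ENNReal.ofReal x < a}.indicator (1 : ℝ → ℝ≥0∞)) s = a := by
  rw [lintegral_indicator_one (measurableSet_ofReal_lt a),
    Measure.restrict_apply (measurableSet_ofReal_lt a)]
  rcases eq_or_ne a ⊤ with rfl | ha
  · have : {x : ℝ | ENNReal.ofReal x < ⊤} = univ := by ext x; simp [ENNReal.ofReal_lt_top]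
    rw [this, univ_inter, Real.volume_Ioi]
  · have : {x : ℝ | ENNReal.ofReal x < a} ∩ Ioi 0 = Ioo 0 a.toReal := by
      ext x
      simp only [mem_inter_iff, mem_setOf_eq, mem_Ioi, mem_Ioo]
      constructor
      · rintro ⟨h1, h2⟩
        exact ⟨h2, (ENNReal.ofReal_lt_iff_lt_toReal h2.le ha).mp h1⟩
      · rintro ⟨h1, h2⟩
        exact ⟨(ENNReal.ofReal_lt_iff_lt_toReal h1.le ha).mpr h2, h1⟩
    rw [this, Real.volume_Ioo, sub_zero, ENNReal.ofReal_toReal ha]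

lemma tsum_indicator_count (S : Set ℕ) :
    ∑' n : ℕ, S.indicator (1 : ℕ → ℝ≥0∞) n = Measure.count S := by
  rw [← lintegral_count, lintegral_indicator_one (MeasurableSet.of_discrete)]

lemma layer2 (F G : ℕ → ℝ≥0∞) :
    ∑' n, F n * G n = ∫⁻ s in Ioi (0:ℝ), ∫⁻ t in Ioi (0:ℝ),
      Measure.count {n : ℕ | ENNReal.ofReal s < F n ∧ ENNReal.ofReal t < G n} := by
  set indF : ℕ → ℝ → ℝ≥0∞ := fun n => {x : ℝ | ENNReal.ofReal x < F n}.indicator (1 : ℝ → ℝ≥0∞)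
    with hindF
  set indG : ℕ → ℝ → ℝ≥0∞ := fun n => {x : ℝ | ENNReal.ofReal x < G n}.indicator (1 : ℝ → ℝ≥0∞)
    with hindG
  have mF : ∀ n, Measurable (indF n) := fun n =>
    measurable_one.indicator (measurableSet_ofReal_lt (F n))
  have mG : ∀ n, Measurable (indG n) := fun n =>
    measurable_one.indicator (measurableSet_ofReal_lt (G n))
  have inner : ∀ (n : ℕ) (s : ℝ),
      ∫⁻ t in Ioi (0:ℝ), indF n s * indG n t = indF n s * G n := by
    intro n s
    rw [lintegral_const_mul _ (mG n), vol_lt]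
  have key : ∀ n : ℕ, F n * G n = ∫⁻ s in Ioi (0:ℝ), indF n s * G n := by
    intro n
    rw [lintegral_mul_const _ (mF n), vol_lt]
  calc ∑' n, F n * G n = ∑' n, ∫⁻ s in Ioi (0:ℝ), indF n s * G n := by simp_rw [key]
    _ = ∫⁻ s in Ioi (0:ℝ), ∑' n, indF n s * G n := by
        rw [← lintegral_tsum (fun n => ((mF n).mul_const _).aemeasurable)]
    _ = ∫⁻ s in Ioi (0:ℝ), ∑' n, ∫⁻ t in Ioi (0:ℝ), indF n s * indG n t := by
        congr 1; ext s; congr 1; ext n; rw [inner]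
    _ = ∫⁻ s in Ioi (0:ℝ), ∫⁻ t in Ioi (0:ℝ), ∑' n, indF n s * indG n t := by
        congr 1; ext s
        rw [← lintegral_tsum (fun n => ((mG n).const_mul _).aemeasurable)]
    _ = ∫⁻ s in Ioi (0:ℝ), ∫⁻ t in Ioi (0:ℝ),
        Measure.count {n : ℕ | ENNReal.ofReal s < F n ∧ ENNReal.ofReal t < G n} := by
        congr 1; ext s; congr 1; ext t
        rw [← tsum_indicator_count]
        congr 1; ext n
        simp only [Set.indicator_apply, mem_setOf_eq, hindF, hindG, Pi.one_apply]
        by_cases h1 : ENNReal.ofReal s < F n <;> by_cases h2 : ENNReal.ofReal t < G n <;>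
          simp [h1, h2]

lemma min_count_cases (S T : Set ℕ) :
    min (Measure.count S) (Measure.count T) = ⊤ ∨
      ∃ m : ℕ, min (Measure.count S) (Measure.count T) = m := by
  rcases count_top_or_nat S with hS | ⟨m, hm⟩ <;> rcases count_top_or_nat T with hT | ⟨k, hk⟩
  · left; simp [hS, hT]
  · right; exact ⟨k, by simp [hS, hk]⟩
  · right; exact ⟨m, by simp [hm, hT]⟩
  · right
    rcases le_total (Measure.count S) (Measure.count T) with h | h
    · exact ⟨m, by rw [min_eq_left h, hm]⟩
    · exact ⟨k, by rw [min_eq_right h, hk]⟩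

lemma hardy_littlewood (F G : ℕ → ℝ≥0∞) :
    ∑' n, F n * G n ≤ ∑' n, rearrE F n * rearrE G n := by
  rw [layer2 F G, layer2 (rearrE F) (rearrE G)]
  refine lintegral_mono fun s => lintegral_mono fun t => ?_
  set c := min (mcount F (ENNReal.ofReal s)) (mcount G (ENNReal.ofReal t)) with hc
  have hcc : c = ⊤ ∨ ∃ m : ℕ, c = m :=
    min_count_cases {k | ENNReal.ofReal s < F k} {k | ENNReal.ofReal t < G k}
  have hset : {n : ℕ | ENNReal.ofReal s < rearrE F n ∧ ENNReal.ofReal t < rearrE G n}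
      = {n : ℕ | (n : ℝ≥0∞) < c} := by
    ext n
    simp only [mem_setOf_eq, lt_rearrE_iff, hc, lt_min_iff]
  rw [hset, count_lt_cast hcc]
  refine le_min (measure_mono fun n hn => hn.1) (measure_mono fun n hn => hn.2)

lemma rpow_sub_mono' {r : ℝ} (hr : 1 ≤ r) {x y D : ℝ} (hx : 0 ≤ x) (hxy : x ≤ y) (hD : 0 ≤ D) :
    (x + D) ^ r - x ^ r ≤ (y + D) ^ r - y ^ r := by
  rcases eq_or_lt_of_le hD with rfl | hD
  · simp
  rcases eq_or_lt_of_le hxy with rfl | hxy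
  · exact le_refl _
  have hy : (0:ℝ) ≤ y := hx.trans hxy.le
  have hcf := convexOn_rpow hr
  have m1 : x ∈ Ici (0:ℝ) := hx
  have m2 : x + D ∈ Ici (0:ℝ) := by simp only [mem_Ici]; linarith
  have m3 : y ∈ Ici (0:ℝ) := hy
  have m4 : y + D ∈ Ici (0:ℝ) := by simp only [mem_Ici]; linarith
  have h1 := hcf.secant_mono m1 m2 m4 (by intro h; nlinarith) (by intro h; nlinarith) (by linarith)
  have h2 := hcf.secant_mono m4 m1 m3 (by intro h; nlinarith) (by intro h; nlinarith) hxy.le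
  have h2' : ((y + D) ^ r - x ^ r) / (y + D - x) ≤ ((y + D) ^ r - y ^ r) / (y + D - y) := by
    rw [← neg_div_neg_eq] at h2
    rw [← neg_div_neg_eq ((y:ℝ) ^ r - (y + D) ^ r)] at h2
    simpa [neg_sub] using h2
  have key : ((x + D) ^ r - x ^ r) / (x + D - x) ≤ ((y + D) ^ r - y ^ r) / (y + D - y) :=
    h1.trans h2'
  have hxx : x + D - x = D := by ring
  have hyy : y + D - y = D := by ring
  rw [hxx, hyy] at key
  exact (div_le_div_iff_of_pos_right hD).mp key

section RealLemmas

variable {p r : ℝ} (hp0 : 0 < p) (hp1 : p ≤ 1)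

lemma step3 (hp0 : 0 < p) (hp1 : p ≤ 1) (hr : r = 1/p) (Ω : ℕ → ℝ) (hΩ : ∀ n, 0 < Ω n)
    (β : ℕ → ℝ) (hβ0 : ∀ n, 0 ≤ β n) (hβa : ∀ n, β (n+1) ≤ β n) (N : ℕ) :
    ∑ m ∈ Finset.range (N+1), (β m - β (m+1)) * (∑ k ∈ Finset.range (m+1), Ω k) ^ r
        + β (N+1) * (∑ k ∈ Finset.range (N+1), Ω k) ^ r
      ≤ (∑ m ∈ Finset.range (N+1), β m ^ p * Ω m) ^ r := by
  have hr1 : 1 ≤ r := by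
    rw [hr]; rw [le_div_iff₀ hp0]; linarith
  have hpr : p * r = 1 := by rw [hr]; field_simp
  have hβanti : Antitone β := antitone_nat_of_succ_le hβa
  have hWpos : ∀ m, 0 < ∑ k ∈ Finset.range (m+1), Ω k := fun m =>
    Finset.sum_pos (fun k _ => hΩ k) (by simp)
  have hpowrp : ∀ x : ℝ, 0 ≤ x → (x ^ p) ^ r = x := by
    intro x hx
    rw [← Real.rpow_mul hx, hpr, Real.rpow_one]
  induction N with
  | zero =>
      simp only [Finset.sum_range_one, zero_add]
      have : (β 0 - β 1) * Ω 0 ^ r + β 1 * Ω 0 ^ r = β 0 * Ω 0 ^ r := by ring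
      rw [this, Real.mul_rpow (Real.rpow_nonneg (hβ0 0) p) (hΩ 0).le, hpowrp _ (hβ0 0)]
  | succ N ih =>
      set W : ℕ → ℝ := fun m => ∑ k ∈ Finset.range (m+1), Ω k with hW
      set X : ℕ → ℝ := fun m => ∑ k ∈ Finset.range (m+1), β k ^ p * Ω k with hX
      have hXN : 0 ≤ X N := Finset.sum_nonneg fun k _ =>
        mul_nonneg (Real.rpow_nonneg (hβ0 k) p) (hΩ k).le
      have hWsucc : W (N+1) = W N + Ω (N+1) := by
        simp only [hW]; rw [Finset.sum_range_succ]
      have hXsucc : X (N+1) = X N + β (N+1) ^ p * Ω (N+1) := by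
        simp only [hX]; rw [Finset.sum_range_succ]
      -- LHS(N+1) = LHS(N) + β(N+1) * (W(N+1)^r - W N ^ r)
      have lhs_eq : ∑ m ∈ Finset.range (N+2), (β m - β (m+1)) * W m ^ r
            + β (N+2) * W (N+1) ^ r
          = (∑ m ∈ Finset.range (N+1), (β m - β (m+1)) * W m ^ r + β (N+1) * W N ^ r)
            + β (N+1) * (W (N+1) ^ r - W N ^ r) := by
        rw [Finset.sum_range_succ]
        ring
      rw [lhs_eq]
      -- key convexity inequality
      have hcu : β (N+1) ^ p * W N ≤ X N := by
        have : ∀ k ∈ Finset.range (N+1), β (N+1) ^ p * Ω k ≤ β k ^ p * Ω k := by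
          intro k hk
          have hk' : k ≤ N + 1 := by
            have := Finset.mem_range.mp hk; omega
          have : β (N+1) ≤ β k := hβanti hk'
          exact mul_le_mul_of_nonneg_right
            (Real.rpow_le_rpow (hβ0 (N+1)) this hp0.le) (hΩ k).le
        calc β (N+1) ^ p * W N = ∑ k ∈ Finset.range (N+1), β (N+1) ^ p * Ω k := by
              rw [Finset.mul_sum]
          _ ≤ ∑ k ∈ Finset.range (N+1), β k ^ p * Ω k := Finset.sum_le_sum this
          _ = X N := rfl
      have hkey : β (N+1) * (W (N+1) ^ r - W N ^ r) ≤ X (N+1) ^ r - X N ^ r := by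
        set c := β (N+1) ^ p with hc
        have hc0 : 0 ≤ c := Real.rpow_nonneg (hβ0 (N+1)) p
        have hcr : c ^ r = β (N+1) := hpowrp _ (hβ0 (N+1))
        have hWN0 : 0 ≤ W N := (hWpos N).le
        have hmono := rpow_sub_mono' hr1 (mul_nonneg hc0 hWN0) hcu
          (mul_nonneg hc0 (hΩ (N+1)).le)
        -- hmono : (c*W N + c*Ω(N+1))^r - (c*W N)^r ≤ (X N + c*Ω(N+1))^r - (X N)^r
        have e1 : (c * W N + c * Ω (N+1)) ^ r = c ^ r * W (N+1) ^ r := by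
          rw [← mul_add, Real.mul_rpow hc0 (add_nonneg hWN0 (hΩ (N+1)).le), hWsucc]
        have e2 : (c * W N) ^ r = c ^ r * W N ^ r := Real.mul_rpow hc0 hWN0
        have e3 : X N + c * Ω (N+1) = X (N+1) := by rw [hXsucc]
        rw [e1, e2, e3, hcr] at hmono
        linarith
      calc (∑ m ∈ Finset.range (N+1), (β m - β (m+1)) * W m ^ r + β (N+1) * W N ^ r)
            + β (N+1) * (W (N+1) ^ r - W N ^ r)
          ≤ X N ^ r + (X (N+1) ^ r - X N ^ r) := add_le_add ih hkey
        _ = X (N+1) ^ r := by ring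

lemma abel_identity (α β : ℕ → ℝ) (N : ℕ) :
    ∑ n ∈ Finset.range (N+1), α n * β n
      = ∑ m ∈ Finset.range (N+1), (β m - β (m+1)) * (∑ k ∈ Finset.range (m+1), α k)
        + β (N+1) * (∑ k ∈ Finset.range (N+1), α k) := by
  induction N with
  | zero => simp [Finset.sum_range_one]; ring
  | succ N ih =>
      rw [Finset.sum_range_succ (fun n => α n * β n), ih,
        Finset.sum_range_succ (fun m => (β m - β (m+1)) * (∑ k ∈ Finset.range (m+1), α k)) (N+1),
        Finset.sum_range_succ α (N+1)]
      rw [Finset.sum_range_succ (fun m => (β m - β (m+1)) * (∑ k ∈ Finset.range (m+1), α k)) N]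
      ring

lemma finite_bound (hp0 : 0 < p) (hp1 : p ≤ 1) (hr : r = 1/p) (Ω : ℕ → ℝ) (hΩ : ∀ n, 0 < Ω n)
    (α β : ℕ → ℝ) (hα0 : ∀ n, 0 ≤ α n) (hβ0 : ∀ n, 0 ≤ β n) (hβa : ∀ n, β (n+1) ≤ β n)
    (Kr : ℝ) (hKr : 0 ≤ Kr)
    (hT : ∀ m, ∑ k ∈ Finset.range (m+1), α k ≤ Kr * (∑ k ∈ Finset.range (m+1), Ω k) ^ r)
    (N : ℕ) :
    ∑ n ∈ Finset.range (N+1), α n * β n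
      ≤ Kr * (∑ m ∈ Finset.range (N+1), β m ^ p * Ω m) ^ r := by
  rw [abel_identity]
  have h1 : ∑ m ∈ Finset.range (N+1), (β m - β (m+1)) * (∑ k ∈ Finset.range (m+1), α k)
        + β (N+1) * (∑ k ∈ Finset.range (N+1), α k)
      ≤ ∑ m ∈ Finset.range (N+1),
          Kr * ((β m - β (m+1)) * (∑ k ∈ Finset.range (m+1), Ω k) ^ r)
        + Kr * (β (N+1) * (∑ k ∈ Finset.range (N+1), Ω k) ^ r) := by
    refine add_le_add (Finset.sum_le_sum fun m _ => ?_) ?_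
    · have hd : 0 ≤ β m - β (m+1) := sub_nonneg.mpr (hβa m)
      calc (β m - β (m+1)) * (∑ k ∈ Finset.range (m+1), α k)
          ≤ (β m - β (m+1)) * (Kr * (∑ k ∈ Finset.range (m+1), Ω k) ^ r) :=
            mul_le_mul_of_nonneg_left (hT m) hd
        _ = Kr * ((β m - β (m+1)) * (∑ k ∈ Finset.range (m+1), Ω k) ^ r) := by ring
    · calc β (N+1) * (∑ k ∈ Finset.range (N+1), α k)
          ≤ β (N+1) * (Kr * (∑ k ∈ Finset.range (N+1), Ω k) ^ r) :=
            mul_le_mul_of_nonneg_left (hT N) (hβ0 (N+1))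
        _ = Kr * (β (N+1) * (∑ k ∈ Finset.range (N+1), Ω k) ^ r) := by ring
  rw [← Finset.mul_sum, ← mul_add] at h1
  exact h1.trans (mul_le_mul_of_nonneg_left (step3 hp0 hp1 hr Ω hΩ β hβ0 hβa N) hKr)

end RealLemmas

lemma iSup_natCast_top : (⨆ M : ℕ, (M : ℝ≥0∞)) = ⊤ := by
  rw [iSup_eq_top]
  intro b hb
  obtain ⟨M, hM⟩ := ENNReal.exists_nat_gt hb.ne
  exact ⟨M, hM⟩

lemma selection (F : ℕ → ℝ≥0∞) (n : ℕ) :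
    ∑ k ∈ Finset.range (n+1), rearrE F k
      ≤ ⨆ (A : Finset ℕ) (_ : A.card ≤ n+1), ∑ k ∈ A, F k := by
  set R := ⨆ (A : Finset ℕ) (_ : A.card ≤ n+1), ∑ k ∈ A, F k with hR
  rcases eq_or_ne R ⊤ with htop | hRne
  · rw [htop]; exact le_top
  -- all rearrE F k are finite, else R = ⊤
  have hfin : ∀ k, k ≤ n → rearrE F k ≠ ⊤ := by
    intro k hk htop
    apply hRne
    rw [eq_top_iff, ← iSup_natCast_top]
    refine iSup_le fun M => ?_
    have hlt : (M : ℝ≥0∞) < rearrE F k := htop ▸ ENNReal.natCast_lt_top M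
    rw [lt_rearrE_iff] at hlt
    have hpos : (0:ℝ≥0∞) < mcount F (M : ℝ≥0∞) := lt_of_le_of_lt zero_le hlt
    have hne : {j : ℕ | (M : ℝ≥0∞) < F j}.Nonempty := by
      rw [nonempty_iff_ne_empty]
      intro hemp
      rw [mcount, hemp, measure_empty] at hpos
      exact lt_irrefl _ hpos
    obtain ⟨j, hj⟩ := hne
    calc (M : ℝ≥0∞) ≤ F j := hj.le
      _ = ∑ k ∈ ({j} : Finset ℕ), F k := by simp
      _ ≤ R := le_iSup₂_of_le ({j} : Finset ℕ) (by simp) le_rfl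
  -- greedy construction
  have greedy : ∀ (ε : ℝ), 0 < ε → ∀ m, m ≤ n → ∃ A : Finset ℕ, A.card = m+1 ∧
      ∑ k ∈ Finset.range (m+1), rearrE F k ≤ ∑ j ∈ A, F j + (↑(m+1) : ℝ≥0∞) * ENNReal.ofReal ε := by
    intro ε hε
    have hstep : ∀ m, m ≤ n → ∀ A : Finset ℕ, A.card ≤ m → ∃ j, j ∉ A ∧
        rearrE F m ≤ F j + ENNReal.ofReal ε := by
      intro m hm A hA
      by_cases hsm : rearrE F m ≤ ENNReal.ofReal ε
      · obtain ⟨j, hj⟩ := Infinite.exists_notMem_finset A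
        exact ⟨j, hj, hsm.trans (le_add_self)⟩
      · push_neg at hsm
        set s := rearrE F m - ENNReal.ofReal ε with hs
        have hslt : s < rearrE F m :=
          ENNReal.sub_lt_self (hfin m hm) (lt_of_le_of_lt zero_le hsm).ne'
            (by simp [ENNReal.ofReal_pos, hε])
        rw [lt_rearrE_iff] at hslt
        have hsub : ¬ {j : ℕ | s < F j} ⊆ ↑A := by
          intro hsub
          have : mcount F s ≤ A.card := by
            rw [mcount]
            calc Measure.count {j : ℕ | s < F j} ≤ Measure.count (↑A : Set ℕ) :=
                  measure_mono hsub
              _ = A.card := Measure.count_apply_finset A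
          have h2 : (m : ℝ≥0∞) < A.card := lt_of_lt_of_le hslt this
          have : m < A.card := by exact_mod_cast h2
          omega
        obtain ⟨j, hjS, hjA⟩ := not_subset.mp hsub
        refine ⟨j, hjA, ?_⟩
        have : rearrE F m = s + ENNReal.ofReal ε := (tsub_add_cancel_of_le hsm.le).symm
        rw [this]
        exact add_le_add (le_of_lt (show s < F j from hjS)) le_rfl
    intro m
    induction m with
    | zero =>
        intro h0
        obtain ⟨j, _, hj⟩ := hstep 0 h0 ∅ (by simp)
        refine ⟨{j}, by simp, ?_⟩
        simpa using hj
    | succ m ih =>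
        intro hm1
        obtain ⟨A, hcard, hsum⟩ := ih (Nat.le_of_succ_le hm1)
        obtain ⟨j, hjA, hj⟩ := hstep (m+1) hm1 A (by omega)
        refine ⟨insert j A, by rw [Finset.card_insert_of_notMem hjA, hcard], ?_⟩
        rw [Finset.sum_range_succ, Finset.sum_insert hjA]
        calc ∑ k ∈ Finset.range (m+1), rearrE F k + rearrE F (m+1)
            ≤ (∑ j ∈ A, F j + (↑(m+1) : ℝ≥0∞) * ENNReal.ofReal ε)
              + (F j + ENNReal.ofReal ε) := add_le_add hsum hj
          _ = F j + ∑ j ∈ A, F j + (↑(m+2) : ℝ≥0∞) * ENNReal.ofReal ε := by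
              push_cast
              ring
    -- conclude
  refine ENNReal.le_of_forall_pos_le_add fun δ hδ _ => ?_
  have hεpos : (0:ℝ) < (δ : ℝ) / (n+1) := by positivity
  obtain ⟨A, hcard, hsum⟩ := greedy _ hεpos n le_rfl
  have hAR : ∑ j ∈ A, F j ≤ R := le_iSup₂_of_le A (by omega) le_rfl
  have harith : (↑(n+1) : ℝ≥0∞) * ENNReal.ofReal ((δ : ℝ) / (n+1)) = (δ : ℝ≥0∞) := by
    rw [← ENNReal.ofReal_natCast (n+1), ← ENNReal.ofReal_mul (by positivity)]
    push_cast
    rw [mul_div_cancel₀ _ (by positivity : ((n:ℝ)+1) ≠ 0)]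
    simp
  calc ∑ k ∈ Finset.range (n+1), rearrE F k
      ≤ ∑ j ∈ A, F j + (↑(n+1) : ℝ≥0∞) * ENNReal.ofReal ((δ : ℝ) / (n+1)) := hsum
    _ ≤ R + δ := by rw [harith]; exact add_le_add hAR le_rfl

lemma rearr_indicator (A : Finset ℕ) (c : ℝ) (hc : 0 < c) :
    rearrSeq (fun k => if k ∈ A then c else 0)
      = fun m => if m < A.card then ENNReal.ofReal c else 0 := by
  have hF : (fun k => ENNReal.ofReal |if k ∈ A then c else 0|)
      = fun k => if k ∈ A then ENNReal.ofReal c else 0 := by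
    ext k
    by_cases hk : k ∈ A <;> simp [hk, abs_of_pos hc]
  have hmc : ∀ s : ℝ≥0∞, mcount (fun k => if k ∈ A then ENNReal.ofReal c else 0) s
      = if s < ENNReal.ofReal c then (A.card : ℝ≥0∞) else 0 := by
    intro s
    by_cases hs : s < ENNReal.ofReal c
    · have : {k : ℕ | s < if k ∈ A then ENNReal.ofReal c else 0} = ↑A := by
        ext k
        by_cases hk : k ∈ A <;> simp [hk, hs]
      rw [mcount, this, Measure.count_apply_finset, if_pos hs]
    · have : {k : ℕ | s < if k ∈ A then ENNReal.ofReal c else 0} = ∅ := by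
        ext k
        by_cases hk : k ∈ A <;> simp [hk, hs]
      rw [mcount, this, measure_empty, if_neg hs]
  rw [rearrSeq_eq_rearrE]
  have : rearrE (fun k => ENNReal.ofReal |if k ∈ A then c else 0|)
      = rearrE (fun k => if k ∈ A then ENNReal.ofReal c else 0) := by rw [hF]
  rw [this]
  ext m
  by_cases hm : m < A.card
  · have hset : {s : ℝ≥0∞ | mcount (fun k => if k ∈ A then ENNReal.ofReal c else 0) s
        ≤ (m : ℝ≥0∞)} = Ici (ENNReal.ofReal c) := by
      ext s
      rw [mem_setOf_eq, hmc s]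
      by_cases hs : s < ENNReal.ofReal c
      · simp only [if_pos hs, mem_Ici]
        constructor
        · intro h
          have : A.card ≤ m := by exact_mod_cast h
          omega
        · intro h; exact absurd hs (not_lt.mpr h)
      · simp only [if_neg hs, mem_Ici]
        exact ⟨fun _ => not_lt.mp hs, fun _ => zero_le⟩
    rw [rearrE, hset, csInf_Ici, if_pos hm]
  · have hset : {s : ℝ≥0∞ | mcount (fun k => if k ∈ A then ENNReal.ofReal c else 0) s
        ≤ (m : ℝ≥0∞)} = univ := by
      ext s
      simp only [mem_setOf_eq, hmc s, mem_univ, iff_true]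
      by_cases hs : s < ENNReal.ofReal c
      · rw [if_pos hs]
        have hcm : A.card ≤ m := Nat.le_of_not_lt hm
        exact_mod_cast hcm
      · rw [if_neg hs]; exact zero_le
    rw [rearrE, hset, if_neg hm]
    exact sInf_univ

section Main

variable {p : ℝ} {Ω : ℕ → ℝ} {f : ℕ → ℝ}

lemma ge_direction (hp0 : 0 < p) (hΩ : ∀ n, 0 < Ω n) (f : ℕ → ℝ) (n : ℕ) :
    (∑ k ∈ Finset.range (n + 1), rearrSeq f k) /
        ENNReal.ofReal ((∑ k ∈ Finset.range (n + 1), Ω k) ^ (1 / p))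
      ≤ ⨆ g ∈ {g : ℕ → ℝ | dNorm Ω p g ≤ 1}, ∑' m, ENNReal.ofReal |f m * g m| := by
  set W : ℝ := ∑ k ∈ Finset.range (n + 1), Ω k with hWdef
  have hW : 0 < W := Finset.sum_pos (fun k _ => hΩ k) (by simp)
  set cR : ℝ := W ^ (-(1 / p)) with hcRdef
  have hcR : 0 < cR := Real.rpow_pos_of_pos hW _
  -- each indicator function is admissible
  have hadm : ∀ A : Finset ℕ, A.card ≤ n + 1 →
      dNorm Ω p (fun k => if k ∈ A then cR else 0) ≤ 1 := by
    intro A hA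
    rw [dNorm, rearr_indicator A cR hcR]
    have hzero : ∀ m ∉ Finset.range A.card,
        (if m < A.card then ENNReal.ofReal cR else 0) ^ p * ENNReal.ofReal (Ω m) = 0 := by
      intro m hm
      rw [Finset.mem_range, not_lt] at hm
      rw [if_neg (not_lt.mpr hm), ENNReal.zero_rpow_of_pos hp0, zero_mul]
    rw [tsum_eq_sum hzero]
    have hsum : ∑ m ∈ Finset.range A.card,
        (if m < A.card then ENNReal.ofReal cR else 0) ^ p * ENNReal.ofReal (Ω m)
        = (ENNReal.ofReal cR) ^ p * ∑ m ∈ Finset.range A.card, ENNReal.ofReal (Ω m) := by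
      rw [Finset.mul_sum]
      refine Finset.sum_congr rfl fun m hm => ?_
      rw [if_pos (Finset.mem_range.mp hm)]
    rw [hsum]
    have hcp : (ENNReal.ofReal cR) ^ p = ENNReal.ofReal W⁻¹ := by
      rw [ENNReal.ofReal_rpow_of_pos hcR]
      congr 1
      rw [hcRdef, ← Real.rpow_mul hW.le]
      have hexp : -(1 / p) * p = -1 := by field_simp
      rw [hexp, Real.rpow_neg_one]
    have hsum2 : ∑ m ∈ Finset.range A.card, ENNReal.ofReal (Ω m) ≤ ENNReal.ofReal W := by
      rw [← ENNReal.ofReal_sum_of_nonneg (fun m _ => (hΩ m).le)]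
      refine ENNReal.ofReal_le_ofReal ?_
      refine Finset.sum_le_sum_of_subset_of_nonneg ?_ (fun m _ _ => (hΩ m).le)
      exact Finset.range_subset_range.mpr hA
    have : (ENNReal.ofReal cR) ^ p * ∑ m ∈ Finset.range A.card, ENNReal.ofReal (Ω m) ≤ 1 := by
      calc (ENNReal.ofReal cR) ^ p * ∑ m ∈ Finset.range A.card, ENNReal.ofReal (Ω m)
          ≤ ENNReal.ofReal W⁻¹ * ENNReal.ofReal W := by
            rw [hcp]; exact mul_le_mul_right hsum2 _
        _ = ENNReal.ofReal (W⁻¹ * W) := (ENNReal.ofReal_mul (by positivity)).symm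
        _ = 1 := by rw [inv_mul_cancel₀ hW.ne']; simp
    calc ((ENNReal.ofReal cR) ^ p * ∑ m ∈ Finset.range A.card, ENNReal.ofReal (Ω m)) ^ (1/p)
        ≤ (1 : ℝ≥0∞) ^ (1/p) := ENNReal.rpow_le_rpow this (by positivity)
      _ = 1 := ENNReal.one_rpow _
  -- value of the pairing at the indicator function
  have hval : ∀ A : Finset ℕ,
      ∑' m, ENNReal.ofReal |f m * (if m ∈ A then cR else 0)|
        = (∑ k ∈ A, ENNReal.ofReal |f k|) * ENNReal.ofReal cR := by
    intro A
    have hzero : ∀ m ∉ A, ENNReal.ofReal |f m * (if m ∈ A then cR else 0)| = 0 := by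
      intro m hm; rw [if_neg hm, mul_zero, abs_zero, ENNReal.ofReal_zero]
    rw [tsum_eq_sum hzero, Finset.sum_mul]
    refine Finset.sum_congr rfl fun m hm => ?_
    rw [if_pos hm, abs_mul, abs_of_pos hcR, ENNReal.ofReal_mul (abs_nonneg _)]
  -- conclude
  have hdiv : (∑ k ∈ Finset.range (n + 1), rearrSeq f k) / ENNReal.ofReal (W ^ (1 / p))
      = (∑ k ∈ Finset.range (n + 1), rearrSeq f k) * ENNReal.ofReal cR := by
    rw [div_eq_mul_inv]
    congr 1
    rw [hcRdef, Real.rpow_neg hW.le, ENNReal.ofReal_inv_of_pos (Real.rpow_pos_of_pos hW _)]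
  rw [hdiv, rearrSeq_eq_rearrE]
  calc (∑ k ∈ Finset.range (n + 1), rearrE (fun k => ENNReal.ofReal |f k|) k) *
        ENNReal.ofReal cR
      ≤ (⨆ (A : Finset ℕ) (_ : A.card ≤ n+1), ∑ k ∈ A, ENNReal.ofReal |f k|) *
        ENNReal.ofReal cR := by
        exact mul_le_mul_left (selection (fun k => ENNReal.ofReal |f k|) n) _
    _ = ⨆ (A : Finset ℕ) (_ : A.card ≤ n+1),
          (∑ k ∈ A, ENNReal.ofReal |f k|) * ENNReal.ofReal cR := by
        rw [ENNReal.iSup_mul]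
        refine iSup_congr fun A => ?_
        rw [ENNReal.iSup_mul]
    _ ≤ ⨆ g ∈ {g : ℕ → ℝ | dNorm Ω p g ≤ 1}, ∑' m, ENNReal.ofReal |f m * g m| := by
        refine iSup_le fun A => iSup_le fun hA => ?_
        rw [← hval A]
        exact le_iSup₂_of_le (fun m => if m ∈ A then cR else 0) (hadm A hA) le_rfl

lemma le_direction (hp0 : 0 < p) (hp1 : p ≤ 1) (hΩ : ∀ n, 0 < Ω n) (f g : ℕ → ℝ)
    (hg : dNorm Ω p g ≤ 1) :
    ∑' m, ENNReal.ofReal |f m * g m|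
      ≤ ⨆ n : ℕ, (∑ k ∈ Finset.range (n + 1), rearrSeq f k) /
          ENNReal.ofReal ((∑ k ∈ Finset.range (n + 1), Ω k) ^ (1 / p)) := by
  set F : ℕ → ℝ≥0∞ := fun k => ENNReal.ofReal |f k| with hF
  set G : ℕ → ℝ≥0∞ := fun k => ENNReal.ofReal |g k| with hG
  set a : ℕ → ℝ≥0∞ := rearrE F with ha
  set b : ℕ → ℝ≥0∞ := rearrE G with hb
  set K : ℝ≥0∞ := ⨆ n : ℕ, (∑ k ∈ Finset.range (n + 1), rearrSeq f k) /
      ENNReal.ofReal ((∑ k ∈ Finset.range (n + 1), Ω k) ^ (1 / p)) with hK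
  have hWpos : ∀ n : ℕ, 0 < ∑ k ∈ Finset.range (n+1), Ω k := fun n =>
    Finset.sum_pos (fun k _ => hΩ k) (by simp)
  have hWr : ∀ n : ℕ, 0 < (∑ k ∈ Finset.range (n+1), Ω k) ^ (1/p) := fun n =>
    Real.rpow_pos_of_pos (hWpos n) _
  -- step 1 : Hardy-Littlewood
  have h1 : ∑' m, ENNReal.ofReal |f m * g m| ≤ ∑' m, a m * b m := by
    have : ∀ m, ENNReal.ofReal |f m * g m| = F m * G m := by
      intro m
      rw [hF, hG, abs_mul, ENNReal.ofReal_mul (abs_nonneg _)]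
    simp_rw [this]
    exact hardy_littlewood F G
  refine h1.trans ?_
  -- the quasi-norm hypothesis, raised to the p-th power
  have hgsum : ∑' m, b m ^ p * ENNReal.ofReal (Ω m) ≤ 1 := by
    have h2 := ENNReal.rpow_le_rpow hg hp0.le
    rw [ENNReal.one_rpow] at h2
    rw [dNorm, ← ENNReal.rpow_mul, one_div_mul_cancel hp0.ne', ENNReal.rpow_one] at h2
    exact h2
  rcases eq_or_ne K ⊤ with htop | hKne
  · rw [htop]; exact le_top
  -- finiteness of a and b
  have hafin : ∀ n, a n ≠ ⊤ := by
    intro n htopa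
    apply hKne
    rw [hK, eq_top_iff]
    refine le_iSup_of_le n ?_
    have hsum_top : ∑ k ∈ Finset.range (n+1), rearrSeq f k = ⊤ := by
      refine ENNReal.sum_eq_top.mpr ⟨n, by simp, ?_⟩
      rw [rearrSeq_eq_rearrE]; exact htopa
    rw [hsum_top, ENNReal.top_div_of_ne_top (by simp [ENNReal.ofReal_ne_top])]
  have hbfin : ∀ n, b n ≠ ⊤ := by
    intro n htopb
    have hterm : b n ^ p * ENNReal.ofReal (Ω n) = ⊤ := by
      rw [htopb, ENNReal.top_rpow_of_pos hp0, ENNReal.top_mul]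
      simp [ENNReal.ofReal_pos.mpr (hΩ n), (ENNReal.ofReal_pos.mpr (hΩ n)).ne']
    have := (ENNReal.le_tsum n).trans hgsum
    rw [hterm] at this
    exact absurd this (by simp)
  -- reduce to finite sums
  have hcover : ∀ t : Finset ℕ, ∃ N : ℕ, t ⊆ Finset.range (N+1) := by
    intro t
    exact ⟨t.sup id, fun x hx => Finset.mem_range.mpr
      (Nat.lt_succ_of_le (Finset.le_sup (f := id) hx))⟩
  rw [ENNReal.tsum_eq_iSup_sum' (fun N : ℕ => Finset.range (N+1)) hcover]
  refine iSup_le fun N => ?_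
  -- real-valued quantities
  set α : ℕ → ℝ := fun n => (a n).toReal with hα
  set β : ℕ → ℝ := fun n => (b n).toReal with hβ
  have hα0 : ∀ n, 0 ≤ α n := fun n => ENNReal.toReal_nonneg
  have hβ0 : ∀ n, 0 ≤ β n := fun n => ENNReal.toReal_nonneg
  have hβa : ∀ n, β (n+1) ≤ β n := fun n =>
    ENNReal.toReal_mono (hbfin n) (rearrE_antitone G (Nat.le_succ n))
  set Kr : ℝ := K.toReal with hKr
  have hKr0 : 0 ≤ Kr := ENNReal.toReal_nonneg
  -- the sup bound, in real form
  have hT : ∀ m : ℕ, ∑ k ∈ Finset.range (m+1), α k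
      ≤ Kr * (∑ k ∈ Finset.range (m+1), Ω k) ^ (1/p) := by
    intro m
    have hle : (∑ k ∈ Finset.range (m+1), rearrSeq f k) ≤
        K * ENNReal.ofReal ((∑ k ∈ Finset.range (m+1), Ω k) ^ (1/p)) := by
      rw [← ENNReal.div_le_iff (ENNReal.ofReal_pos.mpr (hWr m)).ne' ENNReal.ofReal_ne_top]
      have h3 : (∑ k ∈ Finset.range (m+1), rearrSeq f k) /
            ENNReal.ofReal ((∑ k ∈ Finset.range (m+1), Ω k) ^ (1/p))
          ≤ ⨆ n : ℕ, (∑ k ∈ Finset.range (n + 1), rearrSeq f k) /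
            ENNReal.ofReal ((∑ k ∈ Finset.range (n + 1), Ω k) ^ (1 / p)) :=
        le_iSup (fun n => (∑ k ∈ Finset.range (n + 1), rearrSeq f k) /
          ENNReal.ofReal ((∑ k ∈ Finset.range (n + 1), Ω k) ^ (1 / p))) m
      rwa [← hK] at h3
    have hfin2 : K * ENNReal.ofReal ((∑ k ∈ Finset.range (m+1), Ω k) ^ (1/p)) ≠ ⊤ :=
      ENNReal.mul_ne_top hKne ENNReal.ofReal_ne_top
    have h4 := ENNReal.toReal_mono hfin2 hle
    rw [ENNReal.toReal_mul, ENNReal.toReal_ofReal (hWr m).le] at h4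
    have hts : (∑ k ∈ Finset.range (m+1), rearrSeq f k).toReal
        = ∑ k ∈ Finset.range (m+1), α k := ENNReal.toReal_sum fun k _ => hafin k
    rw [hts] at h4
    exact h4
  -- apply the finite real bound
  have hfb := finite_bound hp0 hp1 rfl Ω hΩ α β hα0 hβ0 hβa Kr hKr0 hT N
  have hsum_eq : ∑ n ∈ Finset.range (N+1), a n * b n
      = ENNReal.ofReal (∑ n ∈ Finset.range (N+1), α n * β n) := by
    rw [ENNReal.ofReal_sum_of_nonneg (fun n _ => mul_nonneg (hα0 n) (hβ0 n))]
    refine Finset.sum_congr rfl fun n _ => ?_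
    rw [ENNReal.ofReal_mul (hα0 n), ENNReal.ofReal_toReal (hafin n),
      ENNReal.ofReal_toReal (hbfin n)]
  rw [hsum_eq]
  set Q : ℝ := ∑ m ∈ Finset.range (N+1), β m ^ p * Ω m with hQ
  have hQ0 : 0 ≤ Q :=
    Finset.sum_nonneg fun m _ => mul_nonneg (Real.rpow_nonneg (hβ0 m) p) (hΩ m).le
  have hQ1 : Q ≤ 1 := by
    have hofQ : ENNReal.ofReal Q = ∑ m ∈ Finset.range (N+1), b m ^ p * ENNReal.ofReal (Ω m) := by
      rw [hQ, ENNReal.ofReal_sum_of_nonneg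
        (fun m _ => mul_nonneg (Real.rpow_nonneg (hβ0 m) p) (hΩ m).le)]
      refine Finset.sum_congr rfl fun m _ => ?_
      rw [ENNReal.ofReal_mul (Real.rpow_nonneg (hβ0 m) p)]
      congr 1
      rw [hβ]
      rw [ENNReal.toReal_rpow]
      exact ENNReal.ofReal_toReal (ENNReal.rpow_ne_top_of_nonneg hp0.le (hbfin m))
    have : ENNReal.ofReal Q ≤ 1 := by
      rw [hofQ]
      exact (ENNReal.sum_le_tsum _).trans hgsum
    exact (ENNReal.ofReal_le_one).mp this
  have hQr : Q ^ (1/p) ≤ 1 := Real.rpow_le_one hQ0 hQ1 (by positivity)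
  calc ENNReal.ofReal (∑ n ∈ Finset.range (N+1), α n * β n)
      ≤ ENNReal.ofReal (Kr * Q ^ (1/p)) := ENNReal.ofReal_le_ofReal hfb
    _ ≤ ENNReal.ofReal Kr := ENNReal.ofReal_le_ofReal
        (by nlinarith [mul_le_of_le_one_right hKr0 hQr])
    _ = K := ENNReal.ofReal_toReal hKne

end Main

/-- For `0 < p ≤ 1`, the associate norm of `d(Ω,p)` satisfies
`‖f‖_{d(Ω,p)'} = sup_n W_n^{-1/p} Σ_{k≤n} f*(k)` with `W_n = Σ_{k≤n} Ω_k`. -/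
theorem stmt12 (p : ℝ) (hp0 : 0 < p) (hp1 : p ≤ 1) (Ω : ℕ → ℝ) (hΩ : ∀ n, 0 < Ω n)
    (f : ℕ → ℝ) :
    (⨆ g ∈ {g : ℕ → ℝ | dNorm Ω p g ≤ 1}, ∑' n, ENNReal.ofReal |f n * g n|) =
      ⨆ n : ℕ, (∑ k ∈ Finset.range (n + 1), rearrSeq f k) /
        ENNReal.ofReal ((∑ k ∈ Finset.range (n + 1), Ω k) ^ (1 / p)) := by
  refine le_antisymm ?_ ?_
  · exact iSup₂_le fun g hg => le_direction hp0 hp1 hΩ f g hg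
  · exact iSup_le fun n => ge_direction hp0 hΩ f n
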